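/- For all c, d, h in G, (c ◁ d) ◁ h = c ◁ ((d ◁ h) · h). Equivalently, defining the Grossman–Larson product c ⋆ d := (c ◁ d) · d, the right action maps satisfy R_h ∘ R_d = R_{d ⋆ h}. -/

import Mathlib

/-- Words over the alphabet X = {x₀, x₁}, encoded as lists of booleans
(`false` ↔ x₀, `true` ↔ x₁). -/
abbrev Word : Type := List Bool

/-- Noncommutative formal power series over X with real coefficients. -/
abbrev Series : Type := Word → ℝ

/-- Auxiliary recursion computing the coefficient of the shuffle product. -/
def sh : Word → Series → Series → ℝ
  | [], c, d => c [] * d []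
  | a :: w, c, d => sh w (fun u => c (a :: u)) d + sh w c (fun u => d (a :: u))

/-- The shuffle product of two series. -/
def shuffle (c d : Series) : Series := fun w => sh w c d

/-- Left concatenation by the letter x₀. -/
def X0f (c : Series) : Series := fun w =>
  match w with
  | false :: w' => c w'
  | _ => 0

/-- Left concatenation by the letter x₁. -/
def X1f (c : Series) : Series := fun w =>
  match w with
  | true :: w' => c w'
  | _ => 0

/-- The indicator series of a word. -/
def deltaW (η : Word) : Series := fun w => if w = η then 1 else 0

/-- The shuffle unit 1∅. -/
def oneS : Series := deltaW []

/-- Mixed composition product of a word with a pair of series: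
∅ ∘̃ z = ∅, (x₀η) ∘̃ z = x₀(η ∘̃ z),
(x₁η) ∘̃ z = x₁(z₁ ⧢ (η ∘̃ z)) + x₀(z₂ ⧢ (η ∘̃ z)). -/
def wmix : Word → Series × Series → Series
  | [], _ => oneS
  | false :: η, z => X0f (wmix η z)
  | true :: η, z => X1f (shuffle z.1 (wmix η z)) + X0f (shuffle z.2 (wmix η z))

/-- Mixed composition product `c ∘̃ z`, extended linearly in the left argument.
(Since `wmix η z` vanishes on words shorter than `η`, the sum may be truncated.) -/
def mixcomp (c : Series) (z : Series × Series) : Series := fun w =>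
  ∑ n ∈ Finset.range (w.length + 1), ∑ f : Fin n → Bool,
    c (List.ofFn f) * wmix (List.ofFn f) z w

/-- Composition product of a word with a series:
∅ ∘ d = ∅, (x₀η) ∘ d = x₀(η ∘ d), (x₁η) ∘ d = x₀(d ⧢ (η ∘ d)). -/
def wcomp : Word → Series → Series
  | [], _ => oneS
  | false :: η, d => X0f (wcomp η d)
  | true :: η, d => X0f (shuffle d (wcomp η d))

/-- Composition product `c ∘ d`, extended linearly in the left argument. -/
def compP (c d : Series) : Series := fun w =>
  ∑ n ∈ Finset.range (w.length + 1), ∑ f : Fin n → Bool,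
    c (List.ofFn f) * wcomp (List.ofFn f) d w

/-- The group product on G: (c₁,c₂)·(d₁,d₂) = (c₁ ⧢ d₁, c₂ + c₁ ⧢ d₂). -/
def gmul (c d : Series × Series) : Series × Series :=
  (shuffle c.1 d.1, c.2 + shuffle c.1 d.2)

/-- The identity element e = (1∅, 0) of G. -/
def geId : Series × Series := (oneS, 0)

/-- Shuffle powers. -/
def shPow (c : Series) : ℕ → Series
  | 0 => oneS
  | n + 1 => shuffle c (shPow c n)

/-- Shuffle inverse of a series with constant coefficient 1, via the
geometric series c^{⧢ -1} = Σ_k (1∅ - c)^{⧢ k} (truncated by word length,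
which is exact since 1∅ - c is proper). -/
def shInv (c : Series) : Series := fun w =>
  ∑ k ∈ Finset.range (w.length + 1), shPow (oneS - c) k w

/-- The group inverse in (G,·). -/
def ginv (c : Series × Series) : Series × Series :=
  (shInv c.1, -(shuffle (shInv c.1) c.2))

/-- The product ◁ on G, componentwise mixed composition. -/
def triOp (c d : Series × Series) : Series × Series :=
  (mixcomp c.1 d, mixcomp c.2 d)

/-- The Grossman–Larson product c ⋆ d = (c ◁ d) · d. -/
def starOp (c d : Series × Series) : Series × Series := gmul (triOp c d) d

/-!
The map `c ↦ c ∘̃ z` is determined by the recursion `(c ∘̃ z)(∅) = c(∅)`,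
`x₁⁻¹(c ∘̃ z) = z₁ ⧢ (x₁⁻¹c ∘̃ z)`, `x₀⁻¹(c ∘̃ z) = x₀⁻¹c ∘̃ z + z₂ ⧢ (x₁⁻¹c ∘̃ z)`:
a coefficient at a word `x w` is expressed through coefficients at words no longer than `w`,
because the coefficient of `a ⧢ f` at `w` only involves coefficients of `f` at words no longer than
`w`. The same uniqueness argument shows that `∘̃ z` is a shuffle homomorphism, and then
`c ↦ (c ∘̃ d) ∘̃ h` satisfies the recursion for the pair `(d ◁ h) · h`.
-/

open Finset

/-- The left shift `x⁻¹c` of the paper. -/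
def leftShift (x : Bool) : Series →ₗ[ℝ] Series := LinearMap.funLeft ℝ ℝ (List.cons x)

@[simp] lemma leftShift_apply (x : Bool) (c : Series) (w : Word) :
    leftShift x c w = c (x :: w) := rfl

lemma shuffle_nil (a b : Series) : shuffle a b [] = a [] * b [] := rfl

lemma shuffle_cons (a b : Series) (x : Bool) (w : Word) :
    shuffle a b (x :: w) = shuffle (leftShift x a) b w + shuffle a (leftShift x b) w := rfl

lemma leftShift_shuffle (x : Bool) (a b : Series) :
    leftShift x (shuffle a b) = shuffle (leftShift x a) b + shuffle a (leftShift x b) := rfl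

lemma shuffle_comm (a b : Series) : shuffle a b = shuffle b a := by
  funext w
  induction w generalizing a b with
  | nil => exact mul_comm _ _
  | cons x w ih => rw [shuffle_cons, shuffle_cons, ih (leftShift x a), ih a, add_comm]

lemma shuffle_add_right (a b c : Series) : shuffle a (b + c) = shuffle a b + shuffle a c := by
  funext w
  induction w generalizing a b c with
  | nil => exact mul_add _ _ _
  | cons x w ih =>
    simp only [shuffle_cons, map_add, ih, Pi.add_apply]
    ring

lemma shuffle_add_left (a b c : Series) : shuffle (a + b) c = shuffle a c + shuffle b c := by
  rw [shuffle_comm, shuffle_add_right, shuffle_comm c, shuffle_comm c]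

lemma shuffle_smul_right (r : ℝ) (a b : Series) : shuffle a (r • b) = r • shuffle a b := by
  funext w
  induction w generalizing a b with
  | nil => exact mul_left_comm _ _ _
  | cons x w ih =>
    simp only [shuffle_cons, map_smul, ih, Pi.smul_apply, smul_eq_mul]
    ring

lemma shuffle_assoc (a b c : Series) : shuffle (shuffle a b) c = shuffle a (shuffle b c) := by
  funext w
  induction w generalizing a b c with
  | nil => exact mul_assoc _ _ _
  | cons x w ih =>
    simp only [shuffle_cons, leftShift_shuffle, shuffle_add_left, shuffle_add_right,
      Pi.add_apply, ih]
    ring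

lemma shuffle_left_comm (a b c : Series) :
    shuffle a (shuffle b c) = shuffle b (shuffle a c) := by
  rw [← shuffle_assoc, shuffle_comm a, shuffle_assoc]

def shuffleRight (a : Series) : Series →ₗ[ℝ] Series where
  toFun := shuffle a
  map_add' := shuffle_add_right a
  map_smul' r b := shuffle_smul_right r a b

lemma shuffle_sum_right {ι : Type*} (a : Series) (s : Finset ι) (f : ι → Series) :
    shuffle a (∑ i ∈ s, f i) = ∑ i ∈ s, shuffle a (f i) :=
  map_sum (shuffleRight a) f s

lemma shuffle_zero_right (a : Series) : shuffle a 0 = 0 :=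
  map_zero (shuffleRight a)

def EqUpTo (n : ℕ) (f g : Series) : Prop := ∀ u : Word, u.length ≤ n → f u = g u

lemma EqUpTo.mono {m n : ℕ} {f g : Series} (h : EqUpTo n f g) (hmn : m ≤ n) : EqUpTo m f g :=
  fun u hu => h u (hu.trans hmn)

lemma EqUpTo.add {n : ℕ} {f g f' g' : Series} (h : EqUpTo n f g) (h' : EqUpTo n f' g') :
    EqUpTo n (f + f') (g + g') :=
  fun u hu => congrArg₂ (· + ·) (h u hu) (h' u hu)

lemma EqUpTo.leftShift {n : ℕ} {f g : Series} (h : EqUpTo (n + 1) f g) (x : Bool) :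
    EqUpTo n (leftShift x f) (leftShift x g) :=
  fun u hu => h (x :: u) (by simpa using hu)

lemma shuffle_apply_congr_right (a : Series) {f g : Series} (w : Word)
    (h : EqUpTo w.length f g) : shuffle a f w = shuffle a g w := by
  induction w generalizing a f g with
  | nil => exact congrArg (a [] * ·) (h [] le_rfl)
  | cons x w ih =>
    rw [shuffle_cons, shuffle_cons, ih _ (h.mono (Nat.le_succ _)), ih _ (h.leftShift x)]

lemma EqUpTo.shuffle_right {n : ℕ} {f g : Series} (h : EqUpTo n f g) (a : Series) :
    EqUpTo n (shuffle a f) (shuffle a g) :=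
  fun u hu => shuffle_apply_congr_right a u (h.mono hu)

lemma eq_of_eqUpTo_leftShift {ι : Type*} (Φ Ψ : ι → Series) (h_nil : ∀ i, Φ i [] = Ψ i [])
    (hstep : ∀ n, (∀ i, EqUpTo n (Φ i) (Ψ i)) →
      ∀ i x, EqUpTo n (leftShift x (Φ i)) (leftShift x (Ψ i))) :
    Φ = Ψ := by
  have hall : ∀ n i, EqUpTo n (Φ i) (Ψ i) := by
    intro n
    induction n with
    | zero => rintro i ⟨⟩ _ <;> simp_all
    | succ n ih =>
      rintro i (_ | ⟨x, u⟩) hu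
      · exact h_nil i
      · exact hstep n ih i x u (by simpa using hu)
  funext i w
  exact hall w.length i w le_rfl

lemma sum_ofFn_succ {M : Type*} [AddCommMonoid M] (n : ℕ) (F : Word → M) :
    ∑ f : Fin (n + 1) → Bool, F (List.ofFn f) =
      ∑ b : Bool, ∑ g : Fin n → Bool, F (b :: List.ofFn g) := by
  rw [← (Fin.consEquiv fun _ => Bool).sum_comp, Fintype.sum_prod_type]
  simp [List.ofFn_succ]

section Wmix

variable (z : Series × Series)

lemma leftShift_oneS (x : Bool) : leftShift x oneS = 0 := by
  funext w
  simp [oneS, deltaW]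

lemma wmix_cons_nil (b : Bool) (η : Word) : wmix (b :: η) z [] = 0 := by
  cases b <;> simp [wmix, X0f, X1f]

lemma leftShift_true_wmix_cons (b : Bool) (η : Word) :
    leftShift true (wmix (b :: η) z) = if b then shuffle z.1 (wmix η z) else 0 := by
  funext w
  cases b <;> simp [wmix, X0f, X1f]

lemma leftShift_false_wmix_cons (b : Bool) (η : Word) :
    leftShift false (wmix (b :: η) z) = if b then shuffle z.2 (wmix η z) else wmix η z := by
  funext w
  cases b <;> simp [wmix, X0f, X1f]

lemma wmix_apply_eq_zero_of_length_lt (η w : Word) (h : w.length < η.length) :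
    wmix η z w = 0 := by
  induction η generalizing w with
  | nil => simp at h
  | cons b η ih =>
    obtain _ | ⟨x, w⟩ := w
    · exact wmix_cons_nil z b η
    have hw : EqUpTo w.length (wmix η z) 0 := fun u hu => ih u (by simp at h; omega)
    cases x <;> cases b <;>
      simp [wmix, X0f, X1f, ih w (by simpa using h), shuffle_apply_congr_right _ w hw,
        shuffle_zero_right]

end Wmix

section MixcompRecursion

variable (c : Series) (z : Series × Series)

def mixcompUpTo (N : ℕ) : Series :=
  ∑ n ∈ range (N + 1), ∑ f : Fin n → Bool, c (List.ofFn f) • wmix (List.ofFn f) z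

lemma mixcomp_apply (w : Word) : mixcomp c z w = mixcompUpTo c z w.length w := by
  simp [mixcomp, mixcompUpTo, Finset.sum_apply]

lemma eqUpTo_mixcomp_mixcompUpTo (N : ℕ) : EqUpTo N (mixcomp c z) (mixcompUpTo c z N) := by
  intro w hw
  rw [mixcomp_apply]
  simp only [mixcompUpTo, Finset.sum_apply, Pi.smul_apply, smul_eq_mul]
  refine sum_subset (range_subset_range.2 (by omega)) fun n _ hn => sum_eq_zero fun f _ => ?_
  rw [wmix_apply_eq_zero_of_length_lt z _ w (by simp at hn ⊢; omega), mul_zero]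

lemma mixcompUpTo_succ (N : ℕ) :
    mixcompUpTo c z (N + 1) = c [] • oneS + ∑ n ∈ range (N + 1), ∑ b : Bool,
      ∑ g : Fin n → Bool, c (b :: List.ofFn g) • wmix (b :: List.ofFn g) z := by
  rw [mixcompUpTo, sum_range_succ', add_comm]
  congr 1
  · simp [wmix]
  · exact sum_congr rfl fun n _ => sum_ofFn_succ n fun η => c η • wmix η z

lemma leftShift_true_mixcompUpTo_succ (N : ℕ) :
    leftShift true (mixcompUpTo c z (N + 1)) =
      shuffle z.1 (mixcompUpTo (leftShift true c) z N) := by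
  rw [mixcompUpTo_succ]
  simp only [mixcompUpTo, map_add, map_sum, map_smul, leftShift_oneS,
    leftShift_true_wmix_cons, Fintype.sum_bool, shuffle_sum_right, shuffle_smul_right,
    leftShift_apply]
  simp

lemma leftShift_false_mixcompUpTo_succ (N : ℕ) :
    leftShift false (mixcompUpTo c z (N + 1)) =
      mixcompUpTo (leftShift false c) z N + shuffle z.2 (mixcompUpTo (leftShift true c) z N) := by
  rw [mixcompUpTo_succ]
  simp only [mixcompUpTo, map_add, map_sum, map_smul, leftShift_oneS,
    leftShift_false_wmix_cons, Fintype.sum_bool, shuffle_sum_right, shuffle_smul_right,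
    leftShift_apply]
  simp [sum_add_distrib, add_comm]

lemma mixcomp_nil : mixcomp c z [] = c [] := by
  simp [mixcomp, wmix, oneS, deltaW]

lemma leftShift_true_mixcomp :
    leftShift true (mixcomp c z) = shuffle z.1 (mixcomp (leftShift true c) z) := by
  funext w
  change mixcomp c z (_ :: w) = _
  rw [mixcomp_apply, List.length_cons]
  change leftShift true (mixcompUpTo c z (w.length + 1)) w = _
  rw [leftShift_true_mixcompUpTo_succ,
    shuffle_apply_congr_right _ w (eqUpTo_mixcomp_mixcompUpTo _ z w.length)]

lemma leftShift_false_mixcomp :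
    leftShift false (mixcomp c z) =
      mixcomp (leftShift false c) z + shuffle z.2 (mixcomp (leftShift true c) z) := by
  funext w
  change mixcomp c z (_ :: w) = _
  rw [mixcomp_apply, List.length_cons]
  change leftShift false (mixcompUpTo c z (w.length + 1)) w = _
  rw [leftShift_false_mixcompUpTo_succ, Pi.add_apply, Pi.add_apply, mixcomp_apply,
    shuffle_apply_congr_right _ w (eqUpTo_mixcomp_mixcompUpTo _ z w.length)]

end MixcompRecursion

section MixcompAlgebra

variable (z : Series × Series)

lemma mixcomp_add (a b : Series) : mixcomp (a + b) z = mixcomp a z + mixcomp b z := by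
  funext w
  simp [mixcomp, add_mul, sum_add_distrib]

theorem mixcomp_shuffle (a b : Series) :
    mixcomp (shuffle a b) z = shuffle (mixcomp a z) (mixcomp b z) := by
  let Φ : Series × Series → Series := fun p => mixcomp (shuffle p.1 p.2) z
  let Ψ : Series × Series → Series := fun p => shuffle (mixcomp p.1 z) (mixcomp p.2 z)
  suffices Φ = Ψ from congrFun this (a, b)
  refine eq_of_eqUpTo_leftShift Φ Ψ (fun p => by simp [Φ, Ψ, mixcomp_nil, shuffle_nil]) ?_
  rintro n ih ⟨a, b⟩ (_ | _)
  · have hΦ : leftShift false (Φ (a, b)) = Φ (leftShift false a, b) + Φ (a, leftShift false b) +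
        shuffle z.2 (Φ (leftShift true a, b) + Φ (a, leftShift true b)) := by
      simp only [Φ, leftShift_false_mixcomp, leftShift_shuffle, mixcomp_add]
    have hΨ : leftShift false (Ψ (a, b)) = Ψ (leftShift false a, b) + Ψ (a, leftShift false b) +
        shuffle z.2 (Ψ (leftShift true a, b) + Ψ (a, leftShift true b)) := by
      simp only [Ψ, leftShift_shuffle, leftShift_false_mixcomp, shuffle_add_left,
        shuffle_add_right, shuffle_assoc, shuffle_left_comm _ z.2]
      abel
    rw [hΦ, hΨ]
    exact ((ih _).add (ih _)).add (((ih _).add (ih _)).shuffle_right _)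
  · have hΦ : leftShift true (Φ (a, b)) =
        shuffle z.1 (Φ (leftShift true a, b) + Φ (a, leftShift true b)) := by
      simp only [Φ, leftShift_true_mixcomp, leftShift_shuffle, mixcomp_add]
    have hΨ : leftShift true (Ψ (a, b)) =
        shuffle z.1 (Ψ (leftShift true a, b) + Ψ (a, leftShift true b)) := by
      simp only [Ψ, leftShift_shuffle, leftShift_true_mixcomp, shuffle_add_right, shuffle_assoc,
        shuffle_left_comm _ z.1]
    rw [hΦ, hΨ]
    exact ((ih _).add (ih _)).shuffle_right _

theorem eq_mixcomp_of_leftShift (Φ : Series → Series) (h_nil : ∀ c, Φ c [] = c [])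
    (h_true : ∀ c, leftShift true (Φ c) = shuffle z.1 (Φ (leftShift true c)))
    (h_false : ∀ c, leftShift false (Φ c) =
      Φ (leftShift false c) + shuffle z.2 (Φ (leftShift true c))) :
    Φ = (mixcomp · z) := by
  refine eq_of_eqUpTo_leftShift Φ (mixcomp · z) (fun c => by rw [h_nil, mixcomp_nil]) ?_
  rintro n ih c (_ | _)
  · rw [h_false, leftShift_false_mixcomp]
    exact (ih _).add ((ih _).shuffle_right _)
  · rw [h_true, leftShift_true_mixcomp]
    exact (ih _).shuffle_right _

end MixcompAlgebra

theorem mixcomp_mixcomp (c : Series) (d h : Series × Series) :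
    mixcomp (mixcomp c d) h = mixcomp c (gmul (triOp d h) h) := by
  refine congrFun (eq_mixcomp_of_leftShift _ (fun c => mixcomp (mixcomp c d) h)
    (by simp [mixcomp_nil]) (fun c => ?_) (fun c => ?_)) c
  · simp only [leftShift_true_mixcomp, mixcomp_shuffle, gmul, triOp, shuffle_assoc,
      shuffle_comm (mixcomp d.1 h) h.1]
  · simp only [leftShift_false_mixcomp, leftShift_true_mixcomp, mixcomp_add, mixcomp_shuffle,
      gmul, triOp, shuffle_add_left, shuffle_assoc, shuffle_left_comm h.2, add_assoc]

theorem tri_weighted_assoc_general (c d h : Series × Series) :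
    triOp (triOp c d) h = triOp c (gmul (triOp d h) h) ∧
    triOp (triOp c d) h = triOp c (starOp d h) := by
  have h_assoc : triOp (triOp c d) h = triOp c (gmul (triOp d h) h) := by
    simp only [triOp, mixcomp_mixcomp]
  exact ⟨h_assoc, h_assoc⟩

/-- for c, d, h ∈ G, (c ◁ d) ◁ h = c ◁ ((d ◁ h) · h);
equivalently R_h ∘ R_d = R_{d ⋆ h} for the Grossman–Larson product
d ⋆ h = (d ◁ h) · h. -/
theorem tri_weighted_assoc (c d h : Series × Series)
    (hc : c.1 [] = 1) (hd : d.1 [] = 1) (hh : h.1 [] = 1) :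
    triOp (triOp c d) h = triOp c (gmul (triOp d h) h) ∧
    triOp (triOp c d) h = triOp c (starOp d h) :=
  tri_weighted_assoc_general c d h
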